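/- Let F_q be a finite field, and let ω ≥ 1, r ≥ 0 be integers with n = ω + r. Let b_1, …, b_{ω-1} ∈ F_q^n, and let 𝒜' and 𝒜'' be finite families where each A ∈ 𝒜' ∪ 𝒜'' carries r vectors f^A_e ∈ F_q^n (e ∈ A, |A| = r), and where for each A ∈ 𝒜'' the n-1 projected vectors b_1',…,b_{ω-1}',(f^A_e)' (e∈A) are linearly independent in F_q^{n-1}. Let h ∈ F_q^{n-1} satisfy h ∉ ⋃_{A∈𝒜'} ( ⟨b_1',…,b_{ω-1}'⟩ + ⟨(f^A_e)' : e∈A⟩ ). For each A ∈ 𝒜'', let (α^A, β^A) ∈ F_q^{n-1} be the unique coefficients with h = Σ_{i=1}^{ω-1} α^A_i b_i' + Σ_{e∈A} β^A_e (f^A_e)', and set θ_A = Σ_{i=1}^{ω-1} α^A_i b_{i,n} + Σ_{e∈A} β^A_e f^A_{e,n}. If θ ∈ F_q is nonzero and θ·θ_A ≠ -1 for all A ∈ 𝒜'', then the vector k = θ·h satisfies k ∉ ⋃_{A∈𝒜'} ( ⟨b_1',…,b_{ω-1}'⟩ + ⟨(f^A_e)' : e∈A⟩ ) and k ∉ K_A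 for every A ∈ 𝒜''. -/

import Mathlib

/-! Multiplying by `θ ≠ 0` does not change membership in a subspace, which settles `𝒜'`. For
`A ∈ 𝒜''` the projected vectors are independent, so `θ • h` has the unique coefficients
`(θ α^A, θ β^A)`; membership in `K_A` would then force `θ θ_A = -1`. -/

/-- The vector consisting of the first `n - 1` components of `v`. -/
def projv {F : Type*} [Field F] {n : ℕ} (v : Fin n → F) : Fin (n - 1) → F :=
  fun i => v (Fin.castLE (Nat.sub_le n 1) i)

/-- The last component of `v`. -/
def lastc {F : Type*} [Field F] {n : ℕ} (hn : 0 < n) (v : Fin n → F) : F :=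
  v ⟨n - 1, Nat.sub_lt hn Nat.one_pos⟩

/-- The compressed vector `v(k) = v' + v_n • k`, i.e. `[I_{n-1} k] · v`. -/
def cvec {F : Type*} [Field F] {n : ℕ} (hn : 0 < n) (k : Fin (n - 1) → F)
    (v : Fin n → F) : Fin (n - 1) → F :=
  fun i => projv v i + lastc hn v * k i

/-- The set `K_A` of forbidden compression vectors: all
`Σ αᵢ bᵢ' + Σ βₑ fₑ'` over coefficient tuples `(α, β)` with
`Σ αᵢ b_{i,n} + Σ βₑ f_{e,n} = -1`. -/
def KSet {F : Type*} [Field F] {n : ℕ} {ι κ : Type*} [Fintype ι] [Fintype κ]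
    (hn : 0 < n) (b : ι → Fin n → F) (f : κ → Fin n → F) : Set (Fin (n - 1) → F) :=
  { x | ∃ (α : ι → F) (β : κ → F),
      ((∑ i, α i * lastc hn (b i)) + ∑ e, β e * lastc hn (f e) = -1) ∧
      x = (∑ i, α i • projv (b i)) + ∑ e, β e • projv (f e) }

theorem LinearIndependent.sum_elim_coeffs_eq {R M ι κ : Type*} [Semiring R] [AddCommMonoid M]
    [Module R M] [Fintype ι] [Fintype κ] {b : ι → M} {f : κ → M}
    (hv : LinearIndependent R (Sum.elim b f)) {α α' : ι → R} {β β' : κ → R}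
    (h : ∑ i, α i • b i + ∑ e, β e • f e = ∑ i, α' i • b i + ∑ e, β' e • f e) :
    α = α' ∧ β = β' := by
  have hc := Fintype.linearIndependent_iffₛ.1 hv (Sum.elim α β) (Sum.elim α' β')
    (by simpa only [Fintype.sum_sum_type, Sum.elim_inl, Sum.elim_inr] using h)
  exact ⟨funext fun i => hc (.inl i), funext fun e => hc (.inr e)⟩

theorem combination_mem_KSet_iff {F : Type*} [Field F] {n : ℕ} {ι κ : Type*} [Fintype ι]
    [Fintype κ] (hn : 0 < n) {b : ι → Fin n → F} {f : κ → Fin n → F}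
    (hind : LinearIndependent F (Sum.elim (fun i => projv (b i)) (fun e => projv (f e))))
    (α : ι → F) (β : κ → F) :
    (∑ i, α i • projv (b i)) + ∑ e, β e • projv (f e) ∈ KSet hn b f ↔
      (∑ i, α i * lastc hn (b i)) + ∑ e, β e * lastc hn (f e) = -1 := by
  refine ⟨?_, fun hsum => ⟨α, β, hsum, rfl⟩⟩
  rintro ⟨α', β', hsum, hx⟩
  obtain ⟨rfl, rfl⟩ := hind.sum_elim_coeffs_eq hx
  exact hsum

/-- Verification of Algorithm 1: if `h` avoids `⋃_{A ∈ 𝒜'}(⟨bᵢ'⟩ + ⟨(f^A_e)'⟩)`,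
`(α^A, β^A)` are the coefficients of `h` in the basis `bᵢ', (f^A_e)'` for each
`A ∈ 𝒜''`, `θ_A` is the corresponding last-component combination, and `θ ≠ 0`
satisfies `θ·θ_A ≠ -1` for all `A ∈ 𝒜''`, then `k = θ·h` avoids both
`⋃_{A ∈ 𝒜'}(⟨bᵢ'⟩ + ⟨(f^A_e)'⟩)` and every `K_A`, `A ∈ 𝒜''`. -/
theorem algorithm1_verification (F : Type*) [Field F] (ω r : ℕ)
    (hω : 1 ≤ ω) (b : Fin (ω - 1) → Fin (ω + r) → F)
    (ι' : Type*) [Fintype ι'] (f' : ι' → Fin r → Fin (ω + r) → F)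
    (ι'' : Type*) [Fintype ι''] (f'' : ι'' → Fin r → Fin (ω + r) → F)
    (hind : ∀ A : ι'', LinearIndependent F
      (Sum.elim (fun i => projv (b i)) (fun e => projv (f'' A e))))
    (h : Fin (ω + r - 1) → F)
    (hh : h ∉ ⋃ A : ι',
      (↑(Submodule.span F (Set.range fun i => projv (b i)) ⊔
         Submodule.span F (Set.range fun e => projv (f' A e))) :
        Set (Fin (ω + r - 1) → F)))
    (α : ι'' → Fin (ω - 1) → F) (β : ι'' → Fin r → F)
    (hαβ : ∀ A : ι'',
      h = (∑ i, α A i • projv (b i)) + ∑ e, β A e • projv (f'' A e))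
    (θ : F) (hθ : θ ≠ 0)
    (hθA : ∀ A : ι'',
      θ * ((∑ i, α A i * lastc (by omega : 0 < ω + r) (b i)) +
            ∑ e, β A e * lastc (by omega : 0 < ω + r) (f'' A e)) ≠ -1) :
    (θ • h ∉ ⋃ A : ι',
      (↑(Submodule.span F (Set.range fun i => projv (b i)) ⊔
         Submodule.span F (Set.range fun e => projv (f' A e))) :
        Set (Fin (ω + r - 1) → F))) ∧
    ∀ A : ι'', θ • h ∉ KSet (by omega : 0 < ω + r) b (f'' A) := by
  refine ⟨?_, fun A => ?_⟩
  · simpa only [Set.mem_iUnion, SetLike.mem_coe, Submodule.smul_mem_iff _ hθ] using hh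
  · have hk : θ • h =
        (∑ i, (θ * α A i) • projv (b i)) + ∑ e, (θ * β A e) • projv (f'' A e) := by
      rw [hαβ A]
      simp only [smul_add, Finset.smul_sum, smul_smul]
    rw [hk, combination_mem_KSet_iff _ (hind A)]
    simpa only [mul_add, Finset.mul_sum, mul_assoc] using hθA A
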